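/- Let u be a smooth function on ℝ², φ(x) = ln(4/(1+|x|²)²), and define A_{ij} = -u_{ij} + Γ^k_{ij} u_k + (1/2)u_i u_j - (1/4)(u₁² + u₂²)δ_{ij} + e^φ δ_{ij}, where Γ^k_{ij} are the Christoffel symbols of the metric e^φ δ_{ij} (explicitly Γ¹₁₁ = Γ²₁₂ = φ₁/2, Γ²₁₁ = -φ₂/2, Γ¹₁₂ = Γ²₂₂ = φ₂/2, Γ¹₂₂ = -φ₁/2). Then with covariant derivatives taken in the metric e^{u+φ}δ_{ij}, one has ∇₁A₁₂ - ∇₂A₁₁ = ((1/2)(φ₁₁ + φ₂₂) + e^φ)·u₂ = 0. -/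

import Mathlib

/-- The partial derivative of `f` in the `i`-th coordinate direction. -/
noncomputable def pd (i : Fin 2) (f : EuclideanSpace ℝ (Fin 2) → ℝ)
    (x : EuclideanSpace ℝ (Fin 2)) : ℝ :=
  fderiv ℝ f x (EuclideanSpace.single i 1)

/-- The conformal factor of the round sphere metric in stereographic coordinates. -/
noncomputable def phi (x : EuclideanSpace ℝ (Fin 2)) : ℝ :=
  Real.log (4 / (1 + ‖x‖ ^ 2) ^ 2)

/-- A₁₁ = -u₁₁ + Γ¹₁₁u₁ + Γ²₁₁u₂ + (1/2)u₁² - (1/4)|∇u|² + e^φ. -/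
noncomputable def A11 (u : EuclideanSpace ℝ (Fin 2) → ℝ) (x : EuclideanSpace ℝ (Fin 2)) : ℝ :=
  -(pd 0 (pd 0 u) x) + (pd 0 phi x / 2) * pd 0 u x - (pd 1 phi x / 2) * pd 1 u x
    + (1 / 2) * (pd 0 u x) ^ 2 - (1 / 4) * ((pd 0 u x) ^ 2 + (pd 1 u x) ^ 2)
    + Real.exp (phi x)

/-- A₁₂ = -u₁₂ + Γ¹₁₂u₁ + Γ²₁₂u₂ + (1/2)u₁u₂. -/
noncomputable def A12 (u : EuclideanSpace ℝ (Fin 2) → ℝ) (x : EuclideanSpace ℝ (Fin 2)) : ℝ :=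
  -(pd 0 (pd 1 u) x) + (pd 1 phi x / 2) * pd 0 u x + (pd 0 phi x / 2) * pd 1 u x
    + (1 / 2) * (pd 0 u x) * (pd 1 u x)

/-- A₂₂ = -u₂₂ + Γ¹₂₂u₁ + Γ²₂₂u₂ + (1/2)u₂² - (1/4)|∇u|² + e^φ. -/
noncomputable def A22 (u : EuclideanSpace ℝ (Fin 2) → ℝ) (x : EuclideanSpace ℝ (Fin 2)) : ℝ :=
  -(pd 1 (pd 1 u) x) - (pd 0 phi x / 2) * pd 0 u x + (pd 1 phi x / 2) * pd 1 u x
    + (1 / 2) * (pd 1 u x) ^ 2 - (1 / 4) * ((pd 0 u x) ^ 2 + (pd 1 u x) ^ 2)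
    + Real.exp (phi x)

/-- ∇₁A₁₂ in the metric e^{u+φ}δ, with ψ = φ + u:
∇₁A₁₂ = ∂₁A₁₂ - (ψ₁/2)A₁₂ + (ψ₂/2)A₂₂ - (ψ₂/2)A₁₁ - (ψ₁/2)A₁₂. -/
noncomputable def cov1A12 (u : EuclideanSpace ℝ (Fin 2) → ℝ) (x : EuclideanSpace ℝ (Fin 2)) : ℝ :=
  pd 0 (A12 u) x - ((pd 0 phi x + pd 0 u x) / 2) * A12 u x
    + ((pd 1 phi x + pd 1 u x) / 2) * A22 u x
    - ((pd 1 phi x + pd 1 u x) / 2) * A11 u x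
    - ((pd 0 phi x + pd 0 u x) / 2) * A12 u x

/-- ∇₂A₁₁ in the metric e^{u+φ}δ, with ψ = φ + u:
∇₂A₁₁ = ∂₂A₁₁ - 2(ψ₂/2)A₁₁ - 2(ψ₁/2)A₁₂. -/
noncomputable def cov2A11 (u : EuclideanSpace ℝ (Fin 2) → ℝ) (x : EuclideanSpace ℝ (Fin 2)) : ℝ :=
  pd 1 (A11 u) x - (pd 1 phi x + pd 1 u x) * A11 u x - (pd 0 phi x + pd 0 u x) * A12 u x


section Helpers

local notation "E2" => EuclideanSpace ℝ (Fin 2)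

@[fun_prop]
lemma contDiff_phi : ContDiff ℝ (⊤ : ℕ∞) phi :=
  ContDiff.log (contDiff_const.div ((contDiff_const.add (contDiff_norm_sq ℝ)).pow 2)
    (fun x => by positivity)) (fun x => by positivity)

@[fun_prop]
lemma pd_contDiff {f : E2 → ℝ} (hf : ContDiff ℝ (⊤ : ℕ∞) f) (i : Fin 2) : ContDiff ℝ (⊤ : ℕ∞) (pd i f) := by
  unfold pd
  exact (hf.fderiv_right (by simp)).clm_apply contDiff_const

@[fun_prop]
lemma pd_differentiableAt {f : E2 → ℝ} (hf : ContDiff ℝ (⊤ : ℕ∞) f) (i : Fin 2) (x : E2) :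
    DifferentiableAt ℝ (pd i f) x :=
  ((pd_contDiff hf i).differentiable (by simp)).differentiableAt

@[fun_prop]
lemma phi_differentiableAt (x : E2) : DifferentiableAt ℝ phi x :=
  (contDiff_phi.differentiable (by simp)).differentiableAt

variable {f g : E2 → ℝ} {i : Fin 2} {x : E2}

lemma pd_add (hf : DifferentiableAt ℝ f x) (hg : DifferentiableAt ℝ g x) :
    pd i (fun y => f y + g y) x = pd i f x + pd i g x := by
  unfold pd; rw [fderiv_fun_add hf hg]; simp

lemma pd_sub (hf : DifferentiableAt ℝ f x) (hg : DifferentiableAt ℝ g x) :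
    pd i (fun y => f y - g y) x = pd i f x - pd i g x := by
  unfold pd; rw [fderiv_fun_sub hf hg]; simp

lemma pd_neg : pd i (fun y => -f y) x = -pd i f x := by
  unfold pd; rw [fderiv_fun_neg]; simp

lemma pd_mul (hf : DifferentiableAt ℝ f x) (hg : DifferentiableAt ℝ g x) :
    pd i (fun y => f y * g y) x = f x * pd i g x + g x * pd i f x := by
  unfold pd; rw [fderiv_fun_mul hf hg]; simp

lemma pd_const (c : ℝ) : pd i (fun _ => c) x = 0 := by
  unfold pd; rw [fderiv_fun_const]; simp

lemma pd_const_mul (hf : DifferentiableAt ℝ f x) (c : ℝ) :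
    pd i (fun y => c * f y) x = c * pd i f x := by
  unfold pd; rw [fderiv_const_mul hf]; simp

lemma pd_div_const (hf : DifferentiableAt ℝ f x) (c : ℝ) :
    pd i (fun y => f y / c) x = pd i f x / c := by
  have h : (fun y => f y / c) = fun y => (1/c) * f y := by funext y; ring
  rw [h, pd_const_mul hf]; ring

lemma pd_exp (hf : DifferentiableAt ℝ f x) :
    pd i (fun y => Real.exp (f y)) x = Real.exp (f x) * pd i f x := by
  unfold pd; rw [fderiv_exp hf]; simp

lemma pd_sq (hf : DifferentiableAt ℝ f x) :
    pd i (fun y => f y ^ 2) x = 2 * f x * pd i f x := by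
  have h : (fun y => f y ^ 2) = fun y => f y * f y := by funext y; ring
  rw [h, pd_mul hf hf]; ring

lemma pd_comm (hf : ContDiff ℝ (⊤ : ℕ∞) f) (i j : Fin 2) :
    pd i (pd j f) = pd j (pd i f) := by
  funext x
  have hsym : IsSymmSndFDerivAt ℝ f x := hf.contDiffAt.isSymmSndFDerivAt (by rw [minSmoothness_of_isRCLikeNormedField]; exact (WithTop.coe_le_coe.mpr (le_top : (2 : ℕ∞) ≤ ⊤) : ((2 : ℕ∞) : WithTop ℕ∞) ≤ ((⊤ : ℕ∞) : WithTop ℕ∞)))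
  have hd : DifferentiableAt ℝ (fderiv ℝ f) x :=
    ((hf.fderiv_right (m := (⊤ : ℕ∞)) (by simp)).differentiable (by simp)).differentiableAt
  have key : ∀ a b : Fin 2, pd a (pd b f) x
      = fderiv ℝ (fderiv ℝ f) x (EuclideanSpace.single a 1) (EuclideanSpace.single b 1) := by
    intro a b
    unfold pd
    rw [fderiv_clm_apply hd (differentiableAt_const _)]
    simp
  rw [key, key, hsym]

lemma phi_eq (x : E2) : phi x = Real.log 4 - 2 * Real.log (1 + ‖x‖ ^ 2) := by
  have h : (0:ℝ) < 1 + ‖x‖ ^ 2 := by positivity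
  rw [phi, Real.log_div (by norm_num) (by positivity), Real.log_pow]
  push_cast; ring

lemma hasFDerivAt_phi (x : E2) :
    HasFDerivAt phi ((-4 / (1 + ‖x‖ ^ 2)) • (innerSL ℝ x)) x := by
  have h0 : (0:ℝ) < 1 + ‖x‖ ^ 2 := by positivity
  have h1 : HasFDerivAt (fun y : E2 => 1 + ‖y‖ ^ 2) (2 • (innerSL ℝ x)) x := by
    simpa using ((hasStrictFDerivAt_norm_sq x).hasFDerivAt.const_add 1)
  have h2 := (h1.log (ne_of_gt h0)).const_mul (2:ℝ)
  have h3 := (hasFDerivAt_const (Real.log 4) x).sub h2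
  have hfun : phi = fun y : E2 => Real.log 4 - 2 * Real.log (1 + ‖y‖ ^ 2) := funext phi_eq
  rw [hfun]
  refine h3.congr_fderiv ?_
  ext v
  simp only [ContinuousLinearMap.smul_apply, ContinuousLinearMap.sub_apply,
    ContinuousLinearMap.zero_apply, smul_eq_mul]
  field_simp
  simp only [nsmul_eq_mul, Nat.cast_ofNat]; ring

lemma pd_phi (i : Fin 2) (x : E2) : pd i phi x = -4 * x i / (1 + ‖x‖ ^ 2) := by
  unfold pd
  rw [(hasFDerivAt_phi x).fderiv]
  simp only [ContinuousLinearMap.smul_apply, innerSL_apply_apply, EuclideanSpace.inner_single_right,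
    conj_trivial, smul_eq_mul]
  ring

lemma pd_pd_phi (i : Fin 2) (x : E2) :
    pd i (pd i phi) x = (-4 * (1 + ‖x‖ ^ 2) + 8 * (x i) ^ 2) / (1 + ‖x‖ ^ 2) ^ 2 := by
  have h0 : (0:ℝ) < 1 + ‖x‖ ^ 2 := by positivity
  have hfun : pd i phi = fun y : E2 => (-4 * y i) * ((1 + ‖y‖ ^ 2)⁻¹) := by
    funext y
    rw [pd_phi, div_eq_mul_inv]
  rw [hfun]
  have hc : HasFDerivAt (fun y : E2 => y i) (EuclideanSpace.proj (𝕜 := ℝ) i) x :=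
    (EuclideanSpace.proj (𝕜 := ℝ) i).hasFDerivAt
  have h1 := hc.const_mul (-4 : ℝ)
  have hq : HasFDerivAt (fun y : E2 => 1 + ‖y‖ ^ 2) (2 • (innerSL ℝ x)) x := by
    simpa using ((hasStrictFDerivAt_norm_sq x).hasFDerivAt.const_add 1)
  have h2 : HasFDerivAt (fun y : E2 => (1 + ‖y‖ ^ 2)⁻¹)
      (-((1 + ‖x‖ ^ 2) ^ 2)⁻¹ • 2 • (innerSL ℝ x)) x :=
    (hasDerivAt_inv h0.ne').comp_hasFDerivAt x hq
  have h3 := h1.mul h2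
  unfold pd
  rw [show (fun y : E2 => -4 * y i * (1 + ‖y‖ ^ 2)⁻¹) = ((fun y : E2 => -4 * y i) * fun y => (1 + ‖y‖ ^ 2)⁻¹) from rfl, h3.fderiv]
  simp only [ContinuousLinearMap.add_apply, ContinuousLinearMap.smul_apply, innerSL_apply_apply,
    EuclideanSpace.inner_single_right, conj_trivial, smul_eq_mul]
  rw [show (EuclideanSpace.proj (𝕜 := ℝ) i) (EuclideanSpace.single i 1) = 1 by
    simp [EuclideanSpace.proj, EuclideanSpace.single_apply]]
  field_simp
  ring

lemma norm_sq_coords (x : E2) : ‖x‖ ^ 2 = x 0 ^ 2 + x 1 ^ 2 := by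
  rw [EuclideanSpace.norm_eq, Real.sq_sqrt (by positivity)]
  simp [Fin.sum_univ_two, sq_abs]

lemma exp_phi (x : E2) : Real.exp (phi x) = 4 / (1 + ‖x‖ ^ 2) ^ 2 := by
  rw [phi, Real.exp_log (by positivity)]

lemma key_phi (x : E2) :
    (1 / 2) * (pd 0 (pd 0 phi) x + pd 1 (pd 1 phi) x) + Real.exp (phi x) = 0 := by
  rw [pd_pd_phi, pd_pd_phi, exp_phi]
  have h0 : (0:ℝ) < 1 + ‖x‖ ^ 2 := by positivity
  have h := norm_sq_coords x
  field_simp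
  nlinarith [h]

end Helpers

theorem stmt12 (u : EuclideanSpace ℝ (Fin 2) → ℝ) (hu : ContDiff ℝ (⊤ : ℕ∞) u)
    (x : EuclideanSpace ℝ (Fin 2)) :
    cov1A12 u x - cov2A11 u x =
      ((1 / 2) * (pd 0 (pd 0 phi) x + pd 1 (pd 1 phi) x) + Real.exp (phi x)) * pd 1 u x ∧
    ((1 / 2) * (pd 0 (pd 0 phi) x + pd 1 (pd 1 phi) x) + Real.exp (phi x)) * pd 1 u x = 0 := by
  constructor
  · unfold cov1A12 cov2A11 A11 A12 A22
    simp (disch := fun_prop) only [pd_add, pd_sub, pd_neg, pd_mul, pd_const, pd_const_mul,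
      pd_div_const, pd_exp, pd_sq]
    rw [pd_comm (pd_contDiff hu 0) 1 0, pd_comm hu 1 0, pd_comm contDiff_phi 1 0]
    ring
  · rw [key_phi, zero_mul]
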